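/- Fix h with 0 < h < 2π/3 and knots x_j = x_0 + j*h. The trigonometric cubic B-spline T centered at the knot x_i is twice continuously differentiable on all of ℝ; in particular T, T' and T'' are continuous across each of the knots x_{i-2}, x_{i-1}, x_i, x_{i+1}, x_{i+2}. -/

import Mathlib

open scoped Classical

/-- Knot `x_j = x₀ + j h` of a uniform partition. -/
noncomputable def knot (x₀ h : ℝ) (j : ℤ) : ℝ := x₀ + j * h

/-- The trigonometric cubic B-spline centered at the knot `x_i`, defined piecewise
using `Z(y) = sin((x - y)/2)`, `Ẑ(y) = sin((y - x)/2)` and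
`Z_h = sin(h/2) sin(h) sin(3h/2)`. -/
noncomputable def trigBSpline (x₀ h : ℝ) (i : ℤ) (x : ℝ) : ℝ :=
  let xk : ℤ → ℝ := fun j => knot x₀ h j
  let Z : ℝ → ℝ := fun y => Real.sin ((x - y) / 2)
  let Zc : ℝ → ℝ := fun y => Real.sin ((y - x) / 2)
  let Zh : ℝ := Real.sin (h / 2) * Real.sin h * Real.sin (3 * h / 2)
  (1 / Zh) *
    (if x ∈ Set.Icc (xk (i - 2)) (xk (i - 1)) then (Z (xk (i - 2))) ^ 3
     else if x ∈ Set.Icc (xk (i - 1)) (xk i) then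
       Z (xk (i - 2)) * (Z (xk (i - 2)) * Zc (xk i) + Zc (xk (i + 1)) * Z (xk (i - 1)))
         + Zc (xk (i + 2)) * (Z (xk (i - 1))) ^ 2
     else if x ∈ Set.Icc (xk i) (xk (i + 1)) then
       Z (xk (i - 2)) * (Zc (xk (i + 1))) ^ 2
         + Zc (xk (i + 2))
           * (Z (xk (i - 1)) * Zc (xk (i + 1)) + Zc (xk (i + 2)) * Z (xk i))
     else if x ∈ Set.Icc (xk (i + 1)) (xk (i + 2)) then (Zc (xk (i + 2))) ^ 3
     else 0)


noncomputable def tcut (t : ℝ) : ℝ := if 0 ≤ t then Real.sin t ^ 3 else 0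
noncomputable def tc1 (t : ℝ) : ℝ := if 0 ≤ t then 3 * Real.sin t ^ 2 * Real.cos t else 0
noncomputable def tc2 (t : ℝ) : ℝ :=
  if 0 ≤ t then 6 * Real.sin t * Real.cos t ^ 2 - 3 * Real.sin t ^ 3 else 0

lemma tcut_of_nonneg {t : ℝ} (h : 0 ≤ t) : tcut t = Real.sin t ^ 3 := if_pos h

lemma tcut_of_nonpos {t : ℝ} (h : t ≤ 0) : tcut t = 0 := by
  rcases h.lt_or_eq with h | rfl
  · exact if_neg (not_le.2 h)
  · simp [tcut]

lemma sin_cube_hasDerivAt (t : ℝ) :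
    HasDerivAt (fun s => Real.sin s ^ 3) (3 * Real.sin t ^ 2 * Real.cos t) t := by
  have := (Real.hasDerivAt_sin t).pow 3
  norm_num at this
  exact this

lemma tcut_hasDerivAt (t : ℝ) : HasDerivAt tcut (tc1 t) t := by
  rcases lt_trichotomy t 0 with ht | rfl | ht
  · have he : tcut =ᶠ[nhds t] fun _ => (0 : ℝ) :=
      Filter.eventuallyEq_of_mem (Iio_mem_nhds ht) fun s hs => tcut_of_nonpos (le_of_lt hs)
    have h2 := (hasDerivAt_const t (0 : ℝ)).congr_of_eventuallyEq he
    simpa [tc1, not_le.2 ht] using h2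
  · have h1 : tc1 0 = 0 := by simp [tc1]
    rw [h1, hasDerivAt_iff_tendsto_slope]
    have hb : ∀ s : ℝ, ‖slope tcut 0 s‖ ≤ s ^ 2 := by
      intro s
      rcases le_or_gt s 0 with hs | hs
      · rw [slope_def_field, tcut_of_nonpos hs]
        simp [tcut]
        positivity
      · rw [slope_def_field, tcut_of_nonneg hs.le]
        have h0 : tcut 0 = 0 := by simp [tcut]
        rw [h0, sub_zero, sub_zero, Real.norm_eq_abs, abs_div, abs_pow]
        have h1 : |Real.sin s| ≤ |s| := Real.abs_sin_le_abs
        calc |Real.sin s| ^ 3 / |s| ≤ |s| ^ 3 / |s| := by gcongr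
          _ = s ^ 2 := by
              rw [abs_of_pos hs]; field_simp
    exact squeeze_zero_norm hb
      (((continuous_pow 2).tendsto' 0 0 (by norm_num)).mono_left nhdsWithin_le_nhds)
  · have he : tcut =ᶠ[nhds t] fun s => Real.sin s ^ 3 :=
      Filter.eventuallyEq_of_mem (Ioi_mem_nhds ht) fun s hs => tcut_of_nonneg (le_of_lt hs)
    have h2 := (sin_cube_hasDerivAt t).congr_of_eventuallyEq he
    simpa [tc1, ht.le] using h2

lemma branch1_hasDerivAt (t : ℝ) :
    HasDerivAt (fun s => 3 * Real.sin s ^ 2 * Real.cos s)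
      (6 * Real.sin t * Real.cos t ^ 2 - 3 * Real.sin t ^ 3) t := by
  have h : HasDerivAt (fun s => 3 * Real.sin s ^ 2 * Real.cos s)
      (3 * (((2:ℕ):ℝ) * Real.sin t ^ (2 - 1) * Real.cos t) * Real.cos t + 3 * Real.sin t ^ 2 * -Real.sin t) t :=
    (((Real.hasDerivAt_sin t).pow 2).const_mul (3 : ℝ)).mul (Real.hasDerivAt_cos t)
  convert h using 1
  push_cast
  ring

lemma tc1_of_nonneg {t : ℝ} (h : 0 ≤ t) : tc1 t = 3 * Real.sin t ^ 2 * Real.cos t := if_pos h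

lemma tc1_of_nonpos {t : ℝ} (h : t ≤ 0) : tc1 t = 0 := by
  rcases h.lt_or_eq with h | rfl
  · exact if_neg (not_le.2 h)
  · simp [tc1]

lemma tc1_hasDerivAt (t : ℝ) : HasDerivAt tc1 (tc2 t) t := by
  rcases lt_trichotomy t 0 with ht | rfl | ht
  · have he : tc1 =ᶠ[nhds t] fun _ => (0 : ℝ) :=
      Filter.eventuallyEq_of_mem (Iio_mem_nhds ht) fun s hs => tc1_of_nonpos (le_of_lt hs)
    have h2 := (hasDerivAt_const t (0 : ℝ)).congr_of_eventuallyEq he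
    simpa [tc2, not_le.2 ht] using h2
  · have h1 : tc2 0 = 0 := by simp [tc2]
    rw [h1, hasDerivAt_iff_tendsto_slope]
    have hb : ∀ s : ℝ, ‖slope tc1 0 s‖ ≤ 3 * |s| := by
      intro s
      have h0 : tc1 0 = 0 := by simp [tc1]
      rcases le_or_gt s 0 with hs | hs
      · rw [slope_def_field, tc1_of_nonpos hs, h0]
        simp
      · rw [slope_def_field, tc1_of_nonneg hs.le, h0, sub_zero, sub_zero, Real.norm_eq_abs,
          abs_div]
        have h1 : |Real.sin s| ≤ |s| := Real.abs_sin_le_abs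
        have h2 : |3 * Real.sin s ^ 2 * Real.cos s| ≤ 3 * |s| ^ 2 := by
          rw [abs_mul, abs_mul, abs_pow]
          have hc : |Real.cos s| ≤ 1 := Real.abs_cos_le_one s
          have : |Real.sin s| ^ 2 ≤ |s| ^ 2 := by gcongr
          calc |(3 : ℝ)| * |Real.sin s| ^ 2 * |Real.cos s| ≤ |(3 : ℝ)| * |s| ^ 2 * 1 := by
                gcongr
            _ = 3 * |s| ^ 2 := by norm_num
        rw [div_le_iff₀ (by positivity : (0:ℝ) < |s|)]
        calc |3 * Real.sin s ^ 2 * Real.cos s| ≤ 3 * |s| ^ 2 := h2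
          _ = 3 * |s| * |s| := by ring
    apply squeeze_zero_norm hb
    have : Continuous fun s : ℝ => 3 * |s| := by continuity
    exact ((this.tendsto' 0 0 (by norm_num)).mono_left nhdsWithin_le_nhds)
  · have he : tc1 =ᶠ[nhds t] fun s => 3 * Real.sin s ^ 2 * Real.cos s :=
      Filter.eventuallyEq_of_mem (Ioi_mem_nhds ht) fun s hs => tc1_of_nonneg (le_of_lt hs)
    have h2 := (branch1_hasDerivAt t).congr_of_eventuallyEq he
    simpa [tc2, ht.le] using h2

lemma tc2_continuous : Continuous tc2 := by
  rw [continuous_iff_continuousAt]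
  intro t
  rcases lt_trichotomy t 0 with ht | rfl | ht
  · have he : (fun _ => (0:ℝ)) =ᶠ[nhds t] tc2 :=
      Filter.eventuallyEq_of_mem (Iio_mem_nhds ht) fun s hs => (if_neg (not_le.2 hs)).symm
    exact continuousAt_const.congr he
  · have h0 : tc2 0 = 0 := by simp [tc2]
    rw [ContinuousAt, h0]
    have hb : ∀ s : ℝ, ‖tc2 s‖ ≤ 9 * |s| := by
      intro s
      by_cases hs : 0 ≤ s
      · rw [show tc2 s = Real.sin s * (6 * Real.cos s ^ 2 - 3 * Real.sin s ^ 2) by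
          rw [tc2, if_pos hs]; ring]
        rw [Real.norm_eq_abs, abs_mul]
        have h1 : |Real.sin s| ≤ |s| := Real.abs_sin_le_abs
        have h2 : |6 * Real.cos s ^ 2 - 3 * Real.sin s ^ 2| ≤ 9 := by
          rw [abs_le]
          constructor <;> nlinarith [Real.sin_sq_le_one s, Real.cos_sq_le_one s,
            sq_nonneg (Real.sin s), sq_nonneg (Real.cos s)]
        calc |Real.sin s| * |6 * Real.cos s ^ 2 - 3 * Real.sin s ^ 2| ≤ |s| * 9 :=
              mul_le_mul h1 h2 (abs_nonneg _) (abs_nonneg _)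
          _ = 9 * |s| := by ring
      · rw [show tc2 s = 0 from if_neg hs]
        simp
    apply squeeze_zero_norm hb
    have : Continuous fun s : ℝ => 9 * |s| := by continuity
    exact this.tendsto' 0 0 (by norm_num)
  · have he : (fun s => 6 * Real.sin s * Real.cos s ^ 2 - 3 * Real.sin s ^ 3) =ᶠ[nhds t] tc2 :=
      Filter.eventuallyEq_of_mem (Ioi_mem_nhds ht) fun s hs => (if_pos (le_of_lt hs)).symm
    exact (Continuous.continuousAt (by continuity)).congr he

lemma tcut_contDiff : ContDiff ℝ 2 tcut := by
  have hd1 : deriv tcut = tc1 := funext fun t => (tcut_hasDerivAt t).deriv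
  have hd2 : deriv tc1 = tc2 := funext fun t => (tc1_hasDerivAt t).deriv
  rw [show (2 : WithTop ℕ∞) = 1 + 1 from rfl, contDiff_succ_iff_deriv]
  refine ⟨fun t => (tcut_hasDerivAt t).differentiableAt, by simp, ?_⟩
  rw [hd1, contDiff_one_iff_deriv, hd2]
  exact ⟨fun t => (tc1_hasDerivAt t).differentiableAt, tc2_continuous⟩


lemma key1 (u v : ℝ) :
    Real.sin v * Real.sin (2*v) *
      (Real.sin (u+2*v) * (Real.sin (u+2*v) * (-Real.sin u) + (-Real.sin (u-v)) * Real.sin (u+v))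
        + (-Real.sin (u-2*v)) * Real.sin (u+v)^2)
    = Real.sin v * Real.sin (2*v) * Real.sin (u+2*v)^3
      - Real.sin (2*v) * Real.sin (4*v) * Real.sin (u+v)^3 := by
  simp only [show (2:ℝ)*v = v+v from by ring, show (4:ℝ)*v = v+v+v+v from by ring,
    Real.sin_add, Real.cos_add, Real.sin_sub, Real.cos_sub]
  linear_combination
    ((-12)*Real.cos u*Real.sin v^3*Real.cos v^4 + (12)*Real.cos u*Real.sin v^3*Real.cos v^6 + (12)*Real.cos u*Real.sin v^5*Real.cos v^2 + (-12)*Real.cos u*Real.sin v^7*Real.cos v^2 + (-6)*Real.sin u*Real.sin v^2*Real.cos v^5 + (6)*Real.sin u*Real.sin v^2*Real.cos v^7 + (8)*Real.sin u*Real.sin v^4*Real.cos v^3 + (-2)*Real.sin u*Real.sin v^4*Real.cos v^5 + (-2)*Real.sin u*Real.sin v^6*Real.cos v + (-6)*Real.sin u*Real.sin v^6*Real.cos v^3 + (2)*Real.sin u*Real.sin v^8*Real.cos v) * Real.sin_sq_add_cos_sq u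
    + ((12)*Real.cos u*Real.sin v^3*Real.cos v^4 + (-12)*Real.cos u*Real.sin v^5*Real.cos v^2 + (-12)*Real.cos u^3*Real.sin v^3*Real.cos v^4 + (4)*Real.cos u^3*Real.sin v^5*Real.cos v^2 + (6)*Real.sin u*Real.sin v^2*Real.cos v^5 + (-8)*Real.sin u*Real.sin v^4*Real.cos v^3 + (2)*Real.sin u*Real.sin v^6*Real.cos v + (-6)*Real.sin u*Real.cos u^2*Real.sin v^2*Real.cos v^5 + (8)*Real.sin u*Real.cos u^2*Real.sin v^4*Real.cos v^3 + (-2)*Real.sin u*Real.cos u^2*Real.sin v^6*Real.cos v) * Real.sin_sq_add_cos_sq v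

lemma key2 (u v : ℝ) :
    Real.sin v * Real.sin (2*v) *
      (Real.sin (u+2*v) * (-Real.sin (u-v))^2
        + (-Real.sin (u-2*v)) * (Real.sin (u+v) * (-Real.sin (u-v)) + (-Real.sin (u-2*v)) * Real.sin u))
    = Real.sin v * Real.sin (2*v) * Real.sin (u+2*v)^3
      - Real.sin (2*v) * Real.sin (4*v) * Real.sin (u+v)^3
      + Real.sin (3*v) * Real.sin (4*v) * Real.sin u^3 := by
  simp only [show (2:ℝ)*v = v+v from by ring, show (3:ℝ)*v = v+v+v from by ring,
    show (4:ℝ)*v = v+v+v+v from by ring,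
    Real.sin_add, Real.cos_add, Real.sin_sub, Real.cos_sub]
  linear_combination
    ((-12)*Real.cos u*Real.sin v^3*Real.cos v^4 + (12)*Real.cos u*Real.sin v^3*Real.cos v^6 + (12)*Real.cos u*Real.sin v^5*Real.cos v^2 + (-12)*Real.cos u*Real.sin v^7*Real.cos v^2 + (-6)*Real.sin u*Real.sin v^2*Real.cos v^5 + (6)*Real.sin u*Real.sin v^2*Real.cos v^7 + (8)*Real.sin u*Real.sin v^4*Real.cos v^3 + (-2)*Real.sin u*Real.sin v^4*Real.cos v^5 + (-2)*Real.sin u*Real.sin v^6*Real.cos v + (-6)*Real.sin u*Real.sin v^6*Real.cos v^3 + (2)*Real.sin u*Real.sin v^8*Real.cos v) * Real.sin_sq_add_cos_sq u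
    + ((12)*Real.cos u*Real.sin v^3*Real.cos v^4 + (-12)*Real.cos u*Real.sin v^5*Real.cos v^2 + (-12)*Real.cos u^3*Real.sin v^3*Real.cos v^4 + (4)*Real.cos u^3*Real.sin v^5*Real.cos v^2 + (6)*Real.sin u*Real.sin v^2*Real.cos v^5 + (-8)*Real.sin u*Real.sin v^4*Real.cos v^3 + (2)*Real.sin u*Real.sin v^6*Real.cos v + (-6)*Real.sin u*Real.cos u^2*Real.sin v^2*Real.cos v^5 + (8)*Real.sin u*Real.cos u^2*Real.sin v^4*Real.cos v^3 + (-2)*Real.sin u*Real.cos u^2*Real.sin v^6*Real.cos v) * Real.sin_sq_add_cos_sq v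

lemma key3 (u v : ℝ) :
    Real.sin v * Real.sin (2*v) * (-Real.sin (u-2*v))^3
    = Real.sin v * Real.sin (2*v) * Real.sin (u+2*v)^3
      - Real.sin (2*v) * Real.sin (4*v) * Real.sin (u+v)^3
      + Real.sin (3*v) * Real.sin (4*v) * Real.sin u^3
      - Real.sin (2*v) * Real.sin (4*v) * Real.sin (u-v)^3 := by
  simp only [show (2:ℝ)*v = v+v from by ring, show (3:ℝ)*v = v+v+v from by ring,
    show (4:ℝ)*v = v+v+v+v from by ring,
    Real.sin_add, Real.cos_add, Real.sin_sub, Real.cos_sub]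
  linear_combination
    ((-12)*Real.sin u*Real.sin v^2*Real.cos v^5 + (12)*Real.sin u*Real.sin v^2*Real.cos v^7 + (16)*Real.sin u*Real.sin v^4*Real.cos v^3 + (-4)*Real.sin u*Real.sin v^4*Real.cos v^5 + (-4)*Real.sin u*Real.sin v^6*Real.cos v + (-12)*Real.sin u*Real.sin v^6*Real.cos v^3 + (4)*Real.sin u*Real.sin v^8*Real.cos v) * Real.sin_sq_add_cos_sq u
    + ((12)*Real.sin u*Real.sin v^2*Real.cos v^5 + (-16)*Real.sin u*Real.sin v^4*Real.cos v^3 + (4)*Real.sin u*Real.sin v^6*Real.cos v + (-12)*Real.sin u*Real.cos u^2*Real.sin v^2*Real.cos v^5 + (16)*Real.sin u*Real.cos u^2*Real.sin v^4*Real.cos v^3 + (-4)*Real.sin u*Real.cos u^2*Real.sin v^6*Real.cos v) * Real.sin_sq_add_cos_sq v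

lemma key4 (u v : ℝ) :
    Real.sin v * Real.sin (2*v) * Real.sin (u+2*v)^3
      - Real.sin (2*v) * Real.sin (4*v) * Real.sin (u+v)^3
      + Real.sin (3*v) * Real.sin (4*v) * Real.sin u^3
      - Real.sin (2*v) * Real.sin (4*v) * Real.sin (u-v)^3
      + Real.sin v * Real.sin (2*v) * Real.sin (u-2*v)^3 = 0 := by
  simp only [show (2:ℝ)*v = v+v from by ring, show (3:ℝ)*v = v+v+v from by ring,
    show (4:ℝ)*v = v+v+v+v from by ring,
    Real.sin_add, Real.cos_add, Real.sin_sub, Real.cos_sub]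
  linear_combination
    ((12)*Real.sin u*Real.sin v^2*Real.cos v^5 + (-12)*Real.sin u*Real.sin v^2*Real.cos v^7 + (-16)*Real.sin u*Real.sin v^4*Real.cos v^3 + (4)*Real.sin u*Real.sin v^4*Real.cos v^5 + (4)*Real.sin u*Real.sin v^6*Real.cos v + (12)*Real.sin u*Real.sin v^6*Real.cos v^3 + (-4)*Real.sin u*Real.sin v^8*Real.cos v) * Real.sin_sq_add_cos_sq u
    + ((-12)*Real.sin u*Real.sin v^2*Real.cos v^5 + (16)*Real.sin u*Real.sin v^4*Real.cos v^3 + (-4)*Real.sin u*Real.sin v^6*Real.cos v + (12)*Real.sin u*Real.cos u^2*Real.sin v^2*Real.cos v^5 + (-16)*Real.sin u*Real.cos u^2*Real.sin v^4*Real.cos v^3 + (4)*Real.sin u*Real.cos u^2*Real.sin v^6*Real.cos v) * Real.sin_sq_add_cos_sq v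

lemma aux_div {Zh m P S : ℝ} (hZ : Zh ≠ 0) (hm : m ≠ 0) (h : m * P = S) :
    (1 / Zh) * P = (1 / (Zh * m)) * S := by
  rw [← h]
  field_simp

set_option maxHeartbeats 2000000 in
/-- The trigonometric cubic B-spline is twice continuously differentiable on `ℝ`;
in particular `T`, `T'` and `T''` are continuous across each of the knots
`x_{i-2}, …, x_{i+2}`. -/
theorem stmt_15 (x₀ h : ℝ) (hh0 : 0 < h) (hh1 : h < 2 * Real.pi / 3) (i : ℤ) :
    ContDiff ℝ 2 (trigBSpline x₀ h i)
      ∧ ∀ j : ℤ, j ∈ Set.Icc (i - 2) (i + 2) →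
          ContinuousAt (trigBSpline x₀ h i) (knot x₀ h j)
            ∧ ContinuousAt (deriv (trigBSpline x₀ h i)) (knot x₀ h j)
            ∧ ContinuousAt (deriv (deriv (trigBSpline x₀ h i))) (knot x₀ h j) := by
  obtain ⟨v, rfl⟩ : ∃ v, h = 2 * v := ⟨h / 2, by ring⟩
  have hπ : 0 < Real.pi := Real.pi_pos
  have hv0 : 0 < v := by linarith
  have hv3 : 3 * v < Real.pi := by linarith
  have hs1 : 0 < Real.sin v := Real.sin_pos_of_pos_of_lt_pi hv0 (by linarith)
  have hs2 : 0 < Real.sin (2 * v) := Real.sin_pos_of_pos_of_lt_pi (by linarith) (by linarith)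
  have hs3 : 0 < Real.sin (3 * v) := Real.sin_pos_of_pos_of_lt_pi (by linarith) (by linarith)
  have hZ : Real.sin v * Real.sin (2 * v) * Real.sin (3 * v) ≠ 0 := by positivity
  have hm : Real.sin v * Real.sin (2 * v) ≠ 0 := by positivity
  have key : ∀ x : ℝ, trigBSpline x₀ (2 * v) i x =
      (1 / ((Real.sin v * Real.sin (2*v) * Real.sin (3*v)) * (Real.sin v * Real.sin (2*v)))) *
        (Real.sin v * Real.sin (2*v) * tcut ((x - knot x₀ (2*v) (i - 2)) / 2)
          - Real.sin (2*v) * Real.sin (4*v) * tcut ((x - knot x₀ (2*v) (i - 1)) / 2)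
          + Real.sin (3*v) * Real.sin (4*v) * tcut ((x - knot x₀ (2*v) i) / 2)
          - Real.sin (2*v) * Real.sin (4*v) * tcut ((x - knot x₀ (2*v) (i + 1)) / 2)
          + Real.sin v * Real.sin (2*v) * tcut ((x - knot x₀ (2*v) (i + 2)) / 2)) := by
    intro x
    obtain ⟨u, rfl⟩ : ∃ u, x = x₀ + (i : ℝ) * (2 * v) + 2 * u :=
      ⟨(x - x₀ - (i : ℝ) * (2 * v)) / 2, by ring⟩
    have A2 : (x₀ + (i : ℝ) * (2 * v) + 2 * u - knot x₀ (2 * v) (i - 2)) / 2 = u + 2 * v := by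
      simp only [knot]; push_cast; ring
    have A1 : (x₀ + (i : ℝ) * (2 * v) + 2 * u - knot x₀ (2 * v) (i - 1)) / 2 = u + v := by
      simp only [knot]; push_cast; ring
    have A0 : (x₀ + (i : ℝ) * (2 * v) + 2 * u - knot x₀ (2 * v) i) / 2 = u := by
      simp only [knot]; push_cast; ring
    have Am1 : (x₀ + (i : ℝ) * (2 * v) + 2 * u - knot x₀ (2 * v) (i + 1)) / 2 = u - v := by
      simp only [knot]; push_cast; ring
    have Am2 : (x₀ + (i : ℝ) * (2 * v) + 2 * u - knot x₀ (2 * v) (i + 2)) / 2 = u - 2 * v := by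
      simp only [knot]; push_cast; ring
    have B0 : (knot x₀ (2 * v) i - (x₀ + (i : ℝ) * (2 * v) + 2 * u)) / 2 = -u := by
      simp only [knot]; push_cast; ring
    have B1 : (knot x₀ (2 * v) (i + 1) - (x₀ + (i : ℝ) * (2 * v) + 2 * u)) / 2 = -(u - v) := by
      simp only [knot]; push_cast; ring
    have B2 : (knot x₀ (2 * v) (i + 2) - (x₀ + (i : ℝ) * (2 * v) + 2 * u)) / 2 = -(u - 2 * v) := by
      simp only [knot]; push_cast; ring
    have K2 : knot x₀ (2 * v) (i - 2) = x₀ + (i : ℝ) * (2 * v) - 4 * v := by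
      simp only [knot]; push_cast; ring
    have K1 : knot x₀ (2 * v) (i - 1) = x₀ + (i : ℝ) * (2 * v) - 2 * v := by
      simp only [knot]; push_cast; ring
    have K0 : knot x₀ (2 * v) i = x₀ + (i : ℝ) * (2 * v) := by
      simp only [knot]
    have Kp1 : knot x₀ (2 * v) (i + 1) = x₀ + (i : ℝ) * (2 * v) + 2 * v := by
      simp only [knot]; push_cast; ring
    have Kp2 : knot x₀ (2 * v) (i + 2) = x₀ + (i : ℝ) * (2 * v) + 4 * v := by
      simp only [knot]; push_cast; ring
    simp only [trigBSpline]
    rw [show (2 * v) / 2 = v from by ring, show 3 * (2 * v) / 2 = 3 * v from by ring]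
    rcases lt_or_ge u (-(2 * v)) with h1 | h1
    · have n1 : x₀ + (i:ℝ)*(2*v) + 2*u ∉ Set.Icc (knot x₀ (2*v) (i-2)) (knot x₀ (2*v) (i-1)) := by
        rw [K2, K1, Set.mem_Icc]; rintro ⟨c1, c2⟩; linarith
      have n2 : x₀ + (i:ℝ)*(2*v) + 2*u ∉ Set.Icc (knot x₀ (2*v) (i-1)) (knot x₀ (2*v) i) := by
        rw [K1, K0, Set.mem_Icc]; rintro ⟨c1, c2⟩; linarith
      have n3 : x₀ + (i:ℝ)*(2*v) + 2*u ∉ Set.Icc (knot x₀ (2*v) i) (knot x₀ (2*v) (i+1)) := by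
        rw [K0, Kp1, Set.mem_Icc]; rintro ⟨c1, c2⟩; linarith
      have n4 : x₀ + (i:ℝ)*(2*v) + 2*u ∉ Set.Icc (knot x₀ (2*v) (i+1)) (knot x₀ (2*v) (i+2)) := by
        rw [Kp1, Kp2, Set.mem_Icc]; rintro ⟨c1, c2⟩; linarith
      rw [if_neg n1, if_neg n2, if_neg n3, if_neg n4, A2, A1, A0, Am1, Am2,
        tcut_of_nonpos (by linarith : u + 2*v ≤ 0), tcut_of_nonpos (by linarith : u + v ≤ 0),
        tcut_of_nonpos (by linarith : u ≤ 0), tcut_of_nonpos (by linarith : u - v ≤ 0),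
        tcut_of_nonpos (by linarith : u - 2*v ≤ 0)]
      simp
    rcases le_or_gt u (-v) with h2 | h2
    · have m1 : x₀ + (i:ℝ)*(2*v) + 2*u ∈ Set.Icc (knot x₀ (2*v) (i-2)) (knot x₀ (2*v) (i-1)) := by
        rw [K2, K1, Set.mem_Icc]; exact ⟨by linarith, by linarith⟩
      rw [if_pos m1, A2, A1, A0, Am1, Am2,
        tcut_of_nonneg (by linarith : (0:ℝ) ≤ u + 2*v), tcut_of_nonpos (by linarith : u + v ≤ 0),
        tcut_of_nonpos (by linarith : u ≤ 0), tcut_of_nonpos (by linarith : u - v ≤ 0),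
        tcut_of_nonpos (by linarith : u - 2*v ≤ 0)]
      exact aux_div hZ hm (by ring)
    rcases le_or_gt u 0 with h3 | h3
    · have n1 : x₀ + (i:ℝ)*(2*v) + 2*u ∉ Set.Icc (knot x₀ (2*v) (i-2)) (knot x₀ (2*v) (i-1)) := by
        rw [K2, K1, Set.mem_Icc]; rintro ⟨c1, c2⟩; linarith
      have m2 : x₀ + (i:ℝ)*(2*v) + 2*u ∈ Set.Icc (knot x₀ (2*v) (i-1)) (knot x₀ (2*v) i) := by
        rw [K1, K0, Set.mem_Icc]; exact ⟨by linarith, by linarith⟩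
      rw [if_neg n1, if_pos m2, A2, A1, A0, Am1, Am2, B0, B1, B2,
        tcut_of_nonneg (by linarith : (0:ℝ) ≤ u + 2*v), tcut_of_nonneg (by linarith : (0:ℝ) ≤ u + v),
        tcut_of_nonpos (by linarith : u ≤ 0), tcut_of_nonpos (by linarith : u - v ≤ 0),
        tcut_of_nonpos (by linarith : u - 2*v ≤ 0)]
      simp only [Real.sin_neg]
      refine aux_div hZ hm ?_
      linear_combination key1 u v
    rcases le_or_gt u v with h4 | h4
    · have n1 : x₀ + (i:ℝ)*(2*v) + 2*u ∉ Set.Icc (knot x₀ (2*v) (i-2)) (knot x₀ (2*v) (i-1)) := by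
        rw [K2, K1, Set.mem_Icc]; rintro ⟨c1, c2⟩; linarith
      have n2 : x₀ + (i:ℝ)*(2*v) + 2*u ∉ Set.Icc (knot x₀ (2*v) (i-1)) (knot x₀ (2*v) i) := by
        rw [K1, K0, Set.mem_Icc]; rintro ⟨c1, c2⟩; linarith
      have m3 : x₀ + (i:ℝ)*(2*v) + 2*u ∈ Set.Icc (knot x₀ (2*v) i) (knot x₀ (2*v) (i+1)) := by
        rw [K0, Kp1, Set.mem_Icc]; exact ⟨by linarith, by linarith⟩
      rw [if_neg n1, if_neg n2, if_pos m3, A2, A1, A0, Am1, Am2, B1, B2,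
        tcut_of_nonneg (by linarith : (0:ℝ) ≤ u + 2*v), tcut_of_nonneg (by linarith : (0:ℝ) ≤ u + v),
        tcut_of_nonneg (by linarith : (0:ℝ) ≤ u), tcut_of_nonpos (by linarith : u - v ≤ 0),
        tcut_of_nonpos (by linarith : u - 2*v ≤ 0)]
      simp only [Real.sin_neg]
      refine aux_div hZ hm ?_
      linear_combination key2 u v
    rcases le_or_gt u (2 * v) with h5 | h5
    · have n1 : x₀ + (i:ℝ)*(2*v) + 2*u ∉ Set.Icc (knot x₀ (2*v) (i-2)) (knot x₀ (2*v) (i-1)) := by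
        rw [K2, K1, Set.mem_Icc]; rintro ⟨c1, c2⟩; linarith
      have n2 : x₀ + (i:ℝ)*(2*v) + 2*u ∉ Set.Icc (knot x₀ (2*v) (i-1)) (knot x₀ (2*v) i) := by
        rw [K1, K0, Set.mem_Icc]; rintro ⟨c1, c2⟩; linarith
      have n3 : x₀ + (i:ℝ)*(2*v) + 2*u ∉ Set.Icc (knot x₀ (2*v) i) (knot x₀ (2*v) (i+1)) := by
        rw [K0, Kp1, Set.mem_Icc]; rintro ⟨c1, c2⟩; linarith
      have m4 : x₀ + (i:ℝ)*(2*v) + 2*u ∈ Set.Icc (knot x₀ (2*v) (i+1)) (knot x₀ (2*v) (i+2)) := by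
        rw [Kp1, Kp2, Set.mem_Icc]; exact ⟨by linarith, by linarith⟩
      rw [if_neg n1, if_neg n2, if_neg n3, if_pos m4, A2, A1, A0, Am1, Am2, B2,
        tcut_of_nonneg (by linarith : (0:ℝ) ≤ u + 2*v), tcut_of_nonneg (by linarith : (0:ℝ) ≤ u + v),
        tcut_of_nonneg (by linarith : (0:ℝ) ≤ u), tcut_of_nonneg (by linarith : (0:ℝ) ≤ u - v),
        tcut_of_nonpos (by linarith : u - 2*v ≤ 0)]
      simp only [Real.sin_neg]
      refine aux_div hZ hm ?_
      linear_combination key3 u v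
    · have n1 : x₀ + (i:ℝ)*(2*v) + 2*u ∉ Set.Icc (knot x₀ (2*v) (i-2)) (knot x₀ (2*v) (i-1)) := by
        rw [K2, K1, Set.mem_Icc]; rintro ⟨c1, c2⟩; linarith
      have n2 : x₀ + (i:ℝ)*(2*v) + 2*u ∉ Set.Icc (knot x₀ (2*v) (i-1)) (knot x₀ (2*v) i) := by
        rw [K1, K0, Set.mem_Icc]; rintro ⟨c1, c2⟩; linarith
      have n3 : x₀ + (i:ℝ)*(2*v) + 2*u ∉ Set.Icc (knot x₀ (2*v) i) (knot x₀ (2*v) (i+1)) := by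
        rw [K0, Kp1, Set.mem_Icc]; rintro ⟨c1, c2⟩; linarith
      have n4 : x₀ + (i:ℝ)*(2*v) + 2*u ∉ Set.Icc (knot x₀ (2*v) (i+1)) (knot x₀ (2*v) (i+2)) := by
        rw [Kp1, Kp2, Set.mem_Icc]; rintro ⟨c1, c2⟩; linarith
      rw [if_neg n1, if_neg n2, if_neg n3, if_neg n4, A2, A1, A0, Am1, Am2,
        tcut_of_nonneg (by linarith : (0:ℝ) ≤ u + 2*v), tcut_of_nonneg (by linarith : (0:ℝ) ≤ u + v),
        tcut_of_nonneg (by linarith : (0:ℝ) ≤ u), tcut_of_nonneg (by linarith : (0:ℝ) ≤ u - v),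
        tcut_of_nonneg (by linarith : (0:ℝ) ≤ u - 2*v)]
      rw [mul_zero]
      linear_combination
        (-(1 / ((Real.sin v * Real.sin (2*v) * Real.sin (3*v)) * (Real.sin v * Real.sin (2*v))))) *
          key4 u v
  have hfun : trigBSpline x₀ (2 * v) i = fun x =>
      (1 / ((Real.sin v * Real.sin (2*v) * Real.sin (3*v)) * (Real.sin v * Real.sin (2*v)))) *
        (Real.sin v * Real.sin (2*v) * tcut ((x - knot x₀ (2*v) (i - 2)) / 2)
          - Real.sin (2*v) * Real.sin (4*v) * tcut ((x - knot x₀ (2*v) (i - 1)) / 2)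
          + Real.sin (3*v) * Real.sin (4*v) * tcut ((x - knot x₀ (2*v) i) / 2)
          - Real.sin (2*v) * Real.sin (4*v) * tcut ((x - knot x₀ (2*v) (i + 1)) / 2)
          + Real.sin v * Real.sin (2*v) * tcut ((x - knot x₀ (2*v) (i + 2)) / 2)) :=
    funext key
  have haff : ∀ c : ℝ, ContDiff ℝ 2 fun x : ℝ => (x - c) / 2 := fun c =>
    (contDiff_id.sub contDiff_const).div_const 2
  have hC : ContDiff ℝ 2 (trigBSpline x₀ (2 * v) i) := by
    rw [hfun]
    exact contDiff_const.mul
      (((((contDiff_const.mul (tcut_contDiff.comp (haff _))).sub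
            (contDiff_const.mul (tcut_contDiff.comp (haff _)))).add
              (contDiff_const.mul (tcut_contDiff.comp (haff _)))).sub
                (contDiff_const.mul (tcut_contDiff.comp (haff _)))).add
                  (contDiff_const.mul (tcut_contDiff.comp (haff _))))
  have hC1 : ContDiff ℝ 1 (deriv (trigBSpline x₀ (2 * v) i)) := by
    have h2 := hC
    rw [show (2 : WithTop ℕ∞) = 1 + 1 from rfl, contDiff_succ_iff_deriv] at h2
    exact h2.2.2
  exact ⟨hC, fun j _ => ⟨hC.continuous.continuousAt,
    (hC.continuous_deriv (by norm_num)).continuousAt,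
    (hC1.continuous_deriv le_rfl).continuousAt⟩⟩
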